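/- For a connected simple graph G with at least two vertices, every vertex v_i satisfies RE_G(v_i) ≥ (1/d_i) Σ_{j: j~i} 1/d_j. -/

import Mathlib

open Matrix BigOperators Finset
open scoped Classical

/-- `M * Mᴴ` is positive semidefinite. -/
theorem mulConjTranspose_posSemidef {V : Type*} [Fintype V] [DecidableEq V]
    (M : Matrix V V ℝ) : (M * Mᴴ).PosSemidef := by
  simpa using Matrix.posSemidef_conjTranspose_mul_self Mᴴ

/-- The absolute value `|M| = (M M*)^(1/2)` of a matrix. -/
noncomputable def matAbs {V : Type*} [Fintype V] [DecidableEq V]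
    (M : Matrix V V ℝ) : Matrix V V ℝ :=
  ((mulConjTranspose_posSemidef M).1.eigenvectorUnitary : Matrix V V ℝ) *
    diagonal ((↑) ∘ (√·) ∘ (mulConjTranspose_posSemidef M).1.eigenvalues) *
    (star ((mulConjTranspose_posSemidef M).1.eigenvectorUnitary) : Matrix V V ℝ)

/-- The Randić matrix of a simple graph. -/
noncomputable def randicMatrix {V : Type*} [Fintype V] [DecidableEq V]
    (G : SimpleGraph V) : Matrix V V ℝ :=
  Matrix.of fun i j =>
    if G.Adj i j then 1 / Real.sqrt ((G.degree i : ℝ) * (G.degree j : ℝ)) else 0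

/-- The Randić energy of a vertex: `RE_G(v) = |R(G)|_{vv}`. -/
noncomputable def vertexRE {V : Type*} [Fintype V] [DecidableEq V]
    (G : SimpleGraph V) (i : V) : ℝ :=
  matAbs (randicMatrix G) i i

/-- Swapping the two indices in a sum over adjacent pairs. -/
lemma nbr_sum_swap {n : ℕ} (G : SimpleGraph (Fin n)) (f : Fin n → Fin n → ℝ) :
    ∑ i, ∑ j ∈ G.neighborFinset i, f i j = ∑ i, ∑ j ∈ G.neighborFinset i, f j i := by
  simp only [SimpleGraph.neighborFinset_eq_filter, Finset.sum_filter]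
  rw [Finset.sum_comm]
  refine Finset.sum_congr rfl fun i _ => Finset.sum_congr rfl fun j _ => ?_
  rw [G.adj_comm]

/-- The Randić matrix is symmetric. -/
lemma randic_isHermitian {n : ℕ} (G : SimpleGraph (Fin n)) :
    (randicMatrix G).IsHermitian := by
  ext i j
  simp only [randicMatrix, conjTranspose_apply, of_apply, star_trivial]
  rw [G.adj_comm, mul_comm]

/-- The quadratic form of the Randić matrix is bounded by the standard one. -/
lemma randic_quadform_abs_le {n : ℕ} (G : SimpleGraph (Fin n))
    (hd : ∀ v : Fin n, 0 < G.degree v) (x : Fin n → ℝ) :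
    |x ⬝ᵥ (randicMatrix G *ᵥ x)| ≤ x ⬝ᵥ x := by
  set y : Fin n → ℝ := fun v => x v / Real.sqrt (G.degree v) with hy
  have hdpos : ∀ v : Fin n, (0:ℝ) < (G.degree v : ℝ) := fun v => by
    exact_mod_cast hd v
  have hsq : ∀ v : Fin n, Real.sqrt (G.degree v) ^ 2 = (G.degree v : ℝ) := fun v =>
    Real.sq_sqrt (hdpos v).le
  have hspos : ∀ v : Fin n, (0:ℝ) < Real.sqrt (G.degree v) := fun v =>
    Real.sqrt_pos.mpr (hdpos v)
  have hA : x ⬝ᵥ (randicMatrix G *ᵥ x) = ∑ i, ∑ j ∈ G.neighborFinset i, y i * y j := by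
    simp only [dotProduct, mulVec, dotProduct, Finset.mul_sum]
    refine Finset.sum_congr rfl fun i _ => ?_
    rw [SimpleGraph.neighborFinset_eq_filter, Finset.sum_filter]
    refine Finset.sum_congr rfl fun j _ => ?_
    by_cases h : G.Adj i j
    · simp only [h, if_pos, randicMatrix, of_apply]
      rw [Real.sqrt_mul (Nat.cast_nonneg _)]
      field_simp [hy]
      simp only [hy, div_mul_div_comm]
    · simp [randicMatrix, h]
  have hB : x ⬝ᵥ x = ∑ i, ∑ j ∈ G.neighborFinset i, y i * y i := by
    refine Finset.sum_congr rfl fun i _ => ?_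
    rw [Finset.sum_const, SimpleGraph.card_neighborFinset_eq_degree, nsmul_eq_mul]
    have : y i * y i = x i * x i / (G.degree i : ℝ) := by
      rw [hy]
      rw [div_mul_div_comm, Real.mul_self_sqrt (hdpos i).le]
    rw [this, mul_div_cancel₀ _ (ne_of_gt (hdpos i))]
  have hswap : ∑ i, ∑ j ∈ G.neighborFinset i, y i * y i
      = ∑ i, ∑ j ∈ G.neighborFinset i, y j * y j :=
    nbr_sum_swap G (fun i j => y i * y i)
  have e2 : ∑ i, ∑ j ∈ G.neighborFinset i, (y i * y i + y j * y j)
      = 2 * ∑ i, ∑ j ∈ G.neighborFinset i, (y i * y i) := by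
    simp only [Finset.sum_add_distrib]
    rw [← hswap]; ring
  rw [hA, hB, abs_le]
  constructor
  · have h2 : ∑ i, ∑ j ∈ G.neighborFinset i, (-2 * (y i * y j))
        ≤ ∑ i, ∑ j ∈ G.neighborFinset i, (y i * y i + y j * y j) := by
      refine Finset.sum_le_sum fun i _ => Finset.sum_le_sum fun j _ => ?_
      nlinarith [sq_nonneg (y i + y j)]
    rw [e2] at h2
    have e1 : ∑ i, ∑ j ∈ G.neighborFinset i, (-2 * (y i * y j))
        = -2 * ∑ i, ∑ j ∈ G.neighborFinset i, (y i * y j) := by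
      simp [Finset.mul_sum]
    rw [e1] at h2
    linarith
  · have h2 : ∑ i, ∑ j ∈ G.neighborFinset i, (2 * (y i * y j))
        ≤ ∑ i, ∑ j ∈ G.neighborFinset i, (y i * y i + y j * y j) := by
      refine Finset.sum_le_sum fun i _ => Finset.sum_le_sum fun j _ => ?_
      nlinarith [sq_nonneg (y i - y j)]
    rw [e2] at h2
    have e1 : ∑ i, ∑ j ∈ G.neighborFinset i, (2 * (y i * y j))
        = 2 * ∑ i, ∑ j ∈ G.neighborFinset i, (y i * y j) := by
      simp [Finset.mul_sum]
    rw [e1] at h2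
    linarith

/-- RE_G(v_i) ≥ (1/d_i) Σ_{j ~ i} 1/d_j. -/
theorem randic_vertex_energy_lower_bound {n : ℕ} (hn : 2 ≤ n) (G : SimpleGraph (Fin n))
    (hG : G.Connected) (i : Fin n) :
    (1 / (G.degree i : ℝ)) * ∑ j ∈ G.neighborFinset i, 1 / (G.degree j : ℝ) ≤
      vertexRE G i := by
  classical
  -- every vertex has positive degree
  have hd : ∀ v : Fin n, 0 < G.degree v := by
    intro v
    rw [SimpleGraph.degree_pos_iff_exists_adj]
    obtain ⟨w, hw⟩ : ∃ w : Fin n, w ≠ v := by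
      have hcard : 1 < Fintype.card (Fin n) := by simp; omega
      exact Fintype.exists_ne_of_one_lt_card hcard v
    obtain ⟨p⟩ := hG.preconnected v w
    exact ⟨p.getVert 1, p.adj_snd (SimpleGraph.Walk.not_nil_of_ne (Ne.symm hw))⟩
  set R := randicMatrix G with hRdef
  have hR : R.IsHermitian := randic_isHermitian G
  set U : Matrix (Fin n) (Fin n) ℝ := (hR.eigenvectorUnitary : Matrix (Fin n) (Fin n) ℝ)
    with hUdef
  set lam : Fin n → ℝ := hR.eigenvalues with hlamdef
  -- eigenvalues lie in [-1, 1]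
  have heig : ∀ k, |lam k| ≤ 1 := by
    intro k
    set v : Fin n → ℝ := (hR.eigenvectorBasis k : Fin n → ℝ) with hv
    have h1 : lam k = v ⬝ᵥ (R *ᵥ v) := by
      have := hR.eigenvalues_eq k
      simpa using this
    have h2 : v ⬝ᵥ v = 1 := by
      have h := hR.eigenvectorBasis.orthonormal.1 k
      have h2 : (inner ℝ (hR.eigenvectorBasis k) (hR.eigenvectorBasis k) : ℝ) = 1 := by
        rw [real_inner_self_eq_norm_sq, h]; norm_num
      rw [← h2]
      simp only [PiLp.inner_apply, dotProduct, hv, RCLike.inner_apply, conj_trivial]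
    have := randic_quadform_abs_le G hd v
    rw [← h1, h2] at this
    exact this
  have hUU : star U * U = 1 := by
    simpa [hUdef] using (Unitary.mem_iff.mp hR.eigenvectorUnitary.2).1
  have cancel : ∀ X : Matrix (Fin n) (Fin n) ℝ, star U * (U * X) = X := by
    intro X; rw [← Matrix.mul_assoc, hUU, Matrix.one_mul]
  have hspec : R = U * (Matrix.diagonal lam * star U) := by
    have := hR.spectral_theorem
    simpa [Matrix.mul_assoc] using this
  -- the candidate square root
  set S : Matrix (Fin n) (Fin n) ℝ :=
    U * (Matrix.diagonal (fun k => |lam k|) * star U) with hSdef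
  have hSpsd : S.PosSemidef := by
    have h := (Matrix.PosSemidef.diagonal
      (fun k => abs_nonneg (lam k)) : (Matrix.diagonal (fun k => |lam k|)).PosSemidef)
    have := h.mul_mul_conjTranspose_same U
    simpa [hSdef, Matrix.mul_assoc, Matrix.star_eq_conjTranspose] using this
  have key : ∀ d e : Fin n → ℝ,
      (U * (Matrix.diagonal d * star U)) * (U * (Matrix.diagonal e * star U))
        = U * (Matrix.diagonal (fun k => d k * e k) * star U) := by
    intro d e
    rw [Matrix.mul_assoc, Matrix.mul_assoc (Matrix.diagonal d) (star U), cancel,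
      ← Matrix.mul_assoc (Matrix.diagonal d), Matrix.diagonal_mul_diagonal]
  have hRR : R * Rᴴ = U * (Matrix.diagonal (fun k => lam k * lam k) * star U) := by
    rw [hR.eq]
    conv_lhs => rw [hspec]
    exact key lam lam
  have hSsq : S ^ 2 = R * Rᴴ := by
    rw [pow_two, hSdef, hRR, key]
    have : (fun k => |lam k| * |lam k|) = fun k => lam k * lam k := by
      funext k; exact abs_mul_abs_self (lam k)
    rw [this]
  have hSeq : S = matAbs R := by
    have hRR' : R * Rᴴ = cfc (fun x : ℝ => x * x) R := by
      rw [hR.eq, cfc_mul (fun x : ℝ => x) (fun x : ℝ => x) R, cfc_id' ℝ R]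
    have h1 : matAbs R = cfc Real.sqrt (R * Rᴴ) := by
      rw [(mulConjTranspose_posSemidef R).1.cfc_eq, Matrix.IsHermitian.cfc, matAbs]
      simp
      rfl
    have h2 : S = cfc (fun x : ℝ => |x|) R := by
      rw [hR.cfc_eq, Matrix.IsHermitian.cfc]
      simp [hSdef, hUdef, hlamdef, Matrix.mul_assoc]
      rfl
    rw [h1, h2, hRR', ← cfc_comp Real.sqrt (fun x : ℝ => x * x) R]
    congr 1
    funext x
    exact (Real.sqrt_mul_self_eq_abs x).symm
  -- diagonal entries
  have hdiagS : S i i = ∑ k, |lam k| * (U i k * U i k) := by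
    rw [hSdef, Matrix.mul_apply]
    refine Finset.sum_congr rfl fun k _ => ?_
    rw [Matrix.mul_apply]
    rw [Finset.sum_eq_single k]
    · simp [Matrix.diagonal_apply_eq]; ring
    · intro b _ hb; simp [Matrix.diagonal_apply_ne' _ hb]
    · intro h; exact absurd (Finset.mem_univ k) h
  have hdiagRR : (R * Rᴴ) i i = ∑ k, (lam k * lam k) * (U i k * U i k) := by
    rw [hRR, Matrix.mul_apply]
    refine Finset.sum_congr rfl fun k _ => ?_
    rw [Matrix.mul_apply]
    rw [Finset.sum_eq_single k]
    · simp [Matrix.diagonal_apply_eq]; ring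
    · intro b _ hb; simp [Matrix.diagonal_apply_ne' _ hb]
    · intro h; exact absurd (Finset.mem_univ k) h
  -- LHS equals (R * Rᴴ) i i
  have hLHS : (1 / (G.degree i : ℝ)) * ∑ j ∈ G.neighborFinset i, 1 / (G.degree j : ℝ)
      = (R * Rᴴ) i i := by
    rw [hR.eq, Matrix.mul_apply, Finset.mul_sum]
    rw [SimpleGraph.neighborFinset_eq_filter, Finset.sum_filter]
    refine Finset.sum_congr rfl fun j _ => ?_
    by_cases h : G.Adj i j
    · have h' : G.Adj j i := h.symm
      simp only [h, if_pos, hRdef, randicMatrix, of_apply, h', if_true]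
      rw [mul_comm ((G.degree j : ℝ)) ((G.degree i : ℝ))]
      rw [div_mul_div_comm, one_mul, div_mul_div_comm, one_mul,
        Real.mul_self_sqrt (by positivity : (0:ℝ) ≤ (G.degree i : ℝ) * (G.degree j : ℝ))]
    · simp [hRdef, randicMatrix, h, fun h' => h (SimpleGraph.Adj.symm h')]
  have hfinal : vertexRE G i = S i i := by
    rw [vertexRE, ← hRdef, ← hSeq]
  rw [hLHS, hfinal, hdiagRR, hdiagS]
  refine Finset.sum_le_sum fun k _ => ?_
  have h1 : lam k * lam k ≤ |lam k| := by
    nlinarith [heig k, abs_nonneg (lam k), abs_mul_abs_self (lam k)]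
  exact mul_le_mul_of_nonneg_right h1 (mul_self_nonneg _)
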